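/- Let M be a model of T_cas and let B ⊆ I^M be such that |B ∩ I_n^M| ≤ n for every n < ω. Let p_B be the set of formulas {P(x)} ∪ {x ≠ a : a ∈ P^M} ∪ {R(x,b) : b ∈ B} ∪ {¬R(x,b) : b ∈ I^M \ B}. Then p_B is finitely satisfiable in M and has a unique extension to a complete 1-type over M. Moreover, every nonalgebraic complete 1-type over M containing P(x) is obtained this way from a unique such B. -/

import Mathlib

open FirstOrder FirstOrder.Language Cardinal

/-- Unary relation symbols of the Casanovas language: `P`, `I`, and `I_n` for `n < ω`. -/
inductive CasRel1 : Type
  | P : CasRel1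
  | I : CasRel1
  | In (n : ℕ) : CasRel1

/-- The Casanovas language: unary symbols `P`, `I`, `I_n (n < ω)` and a binary symbol `R`. -/
def Lcas : FirstOrder.Language :=
  ⟨fun _ => Empty, fun n => match n with
    | 1 => CasRel1
    | 2 => Unit
    | _ => Empty⟩

variable (M : Type u) [Lcas.Structure M]

/-- The interpretation of `P` in `M`. -/
def PM : Set M := {x | Structure.RelMap (L := Lcas) (n := 1) (CasRel1.P : Lcas.Relations 1) ![x]}

/-- The interpretation of `I` in `M`. -/
def IM : Set M := {x | Structure.RelMap (L := Lcas) (n := 1) (CasRel1.I : Lcas.Relations 1) ![x]}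

/-- The interpretation of `I_n` in `M`. -/
def InM (n : ℕ) : Set M := {x | Structure.RelMap (L := Lcas) (n := 1) (CasRel1.In n : Lcas.Relations 1) ![x]}

/-- The interpretation of `R` in `M`. -/
def RM (x y : M) : Prop := Structure.RelMap (L := Lcas) (n := 2) (Unit.unit : Lcas.Relations 2) ![x, y]

/-- `M` is a model of `T_cas`. -/
structure IsTcasModel : Prop where
  part : ∀ x : M, x ∈ PM M ↔ x ∉ IM M
  P_inf : (PM M).Infinite
  I_inf : (IM M).Infinite
  In_sub : ∀ n : ℕ, InM M n ⊆ IM M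
  In_inf : ∀ n : ℕ, (InM M n).Infinite
  In_disj : ∀ m n : ℕ, m ≠ n → Disjoint (InM M m) (InM M n)
  R_sub : ∀ x y : M, RM M x y → x ∈ PM M ∧ y ∈ IM M
  R_count : ∀ a ∈ PM M, ∀ n : ℕ, ∃ s : Finset M, s.card = n ∧
    ∀ b : M, b ∈ s ↔ b ∈ InM M n ∧ RM M a b
  ext_P : ∀ B₀ B₁ : Finset M, ↑B₀ ⊆ IM M → ↑B₁ ⊆ IM M → Disjoint B₀ B₁ →
    (∀ n : ℕ, ((B₁ : Set M) ∩ InM M n).ncard ≤ n) →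
    ∃ a ∈ PM M, (∀ b ∈ B₁, RM M a b) ∧ ∀ b ∈ B₀, ¬ RM M a b
  ext_I : ∀ A₀ A₁ : Finset M, ↑A₀ ⊆ PM M → ↑A₁ ⊆ PM M → Disjoint A₀ A₁ →
    ∃ b ∈ IM M, (∀ a ∈ A₁, RM M a b) ∧ ∀ a ∈ A₀, ¬ RM M a b

/-- The formula `P(x)`, with free variable `Sum.inr 0` and parameters from `M`. -/
def fP : Lcas.Formula (M ⊕ Fin 1) :=
  Relations.formula₁ (CasRel1.P : Lcas.Relations 1) (Term.var (Sum.inr 0))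

/-- The formula `I(x)`. -/
def fI : Lcas.Formula (M ⊕ Fin 1) :=
  Relations.formula₁ (CasRel1.I : Lcas.Relations 1) (Term.var (Sum.inr 0))

/-- The formula `I_n(x)`. -/
def fIn (n : ℕ) : Lcas.Formula (M ⊕ Fin 1) :=
  Relations.formula₁ (CasRel1.In n : Lcas.Relations 1) (Term.var (Sum.inr 0))

variable {M}

/-- The formula `R(a, x)`, for a parameter `a : M`. -/
def fRleft (a : M) : Lcas.Formula (M ⊕ Fin 1) :=
  Relations.formula₂ (Unit.unit : Lcas.Relations 2) (Term.var (Sum.inl a)) (Term.var (Sum.inr 0))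

/-- The formula `R(x, b)`, for a parameter `b : M`. -/
def fRright (b : M) : Lcas.Formula (M ⊕ Fin 1) :=
  Relations.formula₂ (Unit.unit : Lcas.Relations 2) (Term.var (Sum.inr 0)) (Term.var (Sum.inl b))

/-- The formula `x ≠ b`, for a parameter `b : M`. -/
def fNe (b : M) : Lcas.Formula (M ⊕ Fin 1) :=
  (Term.equal (Term.var (Sum.inr 0)) (Term.var (Sum.inl b))).not

variable (M)

/-- `a` realizes the formula `φ` (with parameters from `M` and one free variable). -/
def RealizesAt (φ : Lcas.Formula (M ⊕ Fin 1)) (a : M) : Prop :=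
  φ.Realize (Sum.elim id fun _ => a)

/-- Every finite subset of `p` is satisfiable in `M`. -/
def FinSatIn (p : Set (Lcas.Formula (M ⊕ Fin 1))) : Prop :=
  ∀ s : Finset (Lcas.Formula (M ⊕ Fin 1)), ↑s ⊆ p → ∃ a : M, ∀ φ ∈ s, RealizesAt M φ a

/-- `p` is a complete 1-type over `M`: a maximal finitely satisfiable set of formulas in one
free variable with parameters from `M`. -/
def IsCompleteTypeOver (p : Set (Lcas.Formula (M ⊕ Fin 1))) : Prop :=
  FinSatIn M p ∧ ∀ q : Set (Lcas.Formula (M ⊕ Fin 1)), FinSatIn M q → p ⊆ q → q = p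

/-- `p` is nonalgebraic: it contains `x ≠ b` for every `b : M`. -/
def IsNonalgebraic (p : Set (Lcas.Formula (M ⊕ Fin 1))) : Prop :=
  ∀ b : M, fNe b ∈ p


variable {M} in
/-- The partial type `p_B` over `M`, for `B ⊆ I^M`: it contains `P(x)`, `x ≠ a` for all
`a ∈ P^M`, `R(x,b)` for `b ∈ B`, and `¬R(x,b)` for `b ∈ I^M \ B`. -/
def typeB (B : Set M) : Set (Lcas.Formula (M ⊕ Fin 1)) :=
  {fP M} ∪ {φ | ∃ a ∈ PM M, φ = fNe a} ∪ {φ | ∃ b ∈ B, φ = fRright b} ∪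
    {φ | ∃ b ∈ IM M \ B, φ = (fRright b).not}

/-!
The core is a quantifier elimination for the sort `P`: for every formula `φ(x)` with parameters
there is a finite `C ⊆ M` such that for `a ∈ P \ C` the truth of `φ(a)` only depends on
`{b ∈ C | R(a, b)}`. This is a back-and-forth argument inside `M`. Positions are finite partial
isomorphisms respecting `P`, `R` and `I_0, …, I_K` whose domain and range contain, with every
element of `P`, its finitely many neighbours in `I_0, …, I_K`. Elements of `I` are matched using
axiom (6), elements of `P` using axiom (5); bounding the number of rounds by `K` keeps the
constraint `|R(a, ·) ∩ I_n| = n` for `n > K` out of the way.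

Hence a finite part of `p_B` fixes the truth value of every formula, and the formulas implied by
finite parts of `p_B` form its unique completion. Conversely a nonalgebraic type `q ∋ P(x)`
contains `p_B` for `B = {b ∈ I | R(x, b) ∈ q}`, and axiom (4) gives `|B ∩ I_n| ≤ n`.
-/

variable {M}

def nbrs (a : M) (n : ℕ) : Set M := {b | b ∈ InM M n ∧ RM M a b}

def IsLow (K : ℕ) (x : M) : Prop := ∃ n ≤ K, x ∈ InM M n

def lowNbrs (K : ℕ) (a : M) : Set M := {b | IsLow K b ∧ RM M a b}

namespace IsTcasModel

lemma notMem_I_of_mem_P (hM : IsTcasModel M) {x : M} (hx : x ∈ PM M) : x ∉ IM M :=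
  (hM.part x).1 hx

lemma mem_I_of_notMem_P (hM : IsTcasModel M) {x : M} (hx : x ∉ PM M) : x ∈ IM M := by
  by_contra h; exact hx ((hM.part x).2 h)

lemma notMem_P_of_mem_In (hM : IsTcasModel M) {x : M} {n : ℕ} (hx : x ∈ InM M n) :
    x ∉ PM M :=
  fun h => hM.notMem_I_of_mem_P h (hM.In_sub n hx)

lemma eq_of_mem_In (hM : IsTcasModel M) {x : M} {m n : ℕ} (hm : x ∈ InM M m)
    (hn : x ∈ InM M n) : m = n := by
  by_contra h; exact Set.disjoint_left.1 (hM.In_disj m n h) hm hn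

lemma not_R_self (hM : IsTcasModel M) (x : M) : ¬ RM M x x := fun h =>
  hM.notMem_I_of_mem_P (hM.R_sub x x h).1 (hM.R_sub x x h).2

lemma exists_P_pattern (hM : IsTcasModel M) {B₀ B₁ : Set M} (hB₀ : B₀.Finite) (hB₁ : B₁.Finite)
    (hB₀I : B₀ ⊆ IM M) (hB₁I : B₁ ⊆ IM M) (hdisj : Disjoint B₀ B₁)
    (hcount : ∀ n, (B₁ ∩ InM M n).ncard ≤ n) :
    ∃ a ∈ PM M, (∀ b ∈ B₁, RM M a b) ∧ ∀ b ∈ B₀, ¬ RM M a b := by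
  simpa using hM.ext_P hB₀.toFinset hB₁.toFinset (by simpa) (by simpa) (by simpa)
    (by simpa using hcount)

lemma exists_I_pattern (hM : IsTcasModel M) {A₀ A₁ : Set M} (hA₀ : A₀.Finite) (hA₁ : A₁.Finite)
    (hA₀P : A₀ ⊆ PM M) (hA₁P : A₁ ⊆ PM M) (hdisj : Disjoint A₀ A₁) :
    ∃ b ∈ IM M, (∀ a ∈ A₁, RM M a b) ∧ ∀ a ∈ A₀, ¬ RM M a b := by
  simpa using hM.ext_I hA₀.toFinset hA₁.toFinset (by simpa) (by simpa) (by simpa)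

lemma exists_I_related_notMem (hM : IsTcasModel M) {A Y : Set M} (hA : A.Finite)
    (hAP : A ⊆ PM M) (hY : Y.Finite) : ∃ b ∈ IM M, b ∉ Y ∧ ∀ a ∈ A, RM M a b := by
  obtain ⟨a₀, ha₀, -, ha₀Y⟩ := hM.exists_P_pattern (hY.inter_of_left (IM M)) Set.finite_empty
    Set.inter_subset_right (Set.empty_subset _) (Set.disjoint_empty _) (by simp)
  obtain ⟨b, hb, hbA, -⟩ := hM.exists_I_pattern Set.finite_empty (hA.insert a₀)
    (Set.empty_subset _) (Set.insert_subset ha₀ hAP) (Set.empty_disjoint _)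
  exact ⟨b, hb, fun hbY => ha₀Y b ⟨hbY, hb⟩ (hbA a₀ (Set.mem_insert _ _)),
    fun a ha => hbA a (Set.mem_insert_of_mem _ ha)⟩

lemma exists_P_pattern_notMem (hM : IsTcasModel M) {B₀ B₁ A : Set M} (hB₀ : B₀.Finite)
    (hB₁ : B₁.Finite) (hB₀I : B₀ ⊆ IM M) (hB₁I : B₁ ⊆ IM M) (hdisj : Disjoint B₀ B₁)
    (hcount : ∀ n, (B₁ ∩ InM M n).ncard ≤ n) (hA : A.Finite) :
    ∃ a ∈ PM M, a ∉ A ∧ (∀ b ∈ B₁, RM M a b) ∧ ∀ b ∈ B₀, ¬ RM M a b := by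
  obtain ⟨b, hb, hbB, hbA⟩ := hM.exists_I_related_notMem (hA.inter_of_left (PM M))
    Set.inter_subset_right (hB₀.union hB₁)
  obtain ⟨a, ha, haB₁, haB₀⟩ := hM.exists_P_pattern (hB₀.insert b) hB₁
    (Set.insert_subset hb hB₀I) hB₁I
    (Set.disjoint_insert_left.2 ⟨fun h => hbB (Or.inr h), hdisj⟩) hcount
  exact ⟨a, ha, fun haA => haB₀ b (Set.mem_insert _ _) (hbA a ⟨haA, ha⟩), haB₁,
    fun b' hb' => haB₀ b' (Set.mem_insert_of_mem _ hb')⟩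

lemma nbrs_eq_empty (hM : IsTcasModel M) {a : M} (ha : a ∉ PM M) (n : ℕ) : nbrs a n = ∅ :=
  Set.eq_empty_of_forall_notMem fun _ hb => ha (hM.R_sub _ _ hb.2).1

lemma exists_finset_eq_nbrs (hM : IsTcasModel M) {a : M} (ha : a ∈ PM M) (n : ℕ) :
    ∃ s : Finset M, s.card = n ∧ ↑s = nbrs a n := by
  obtain ⟨s, hs, hmem⟩ := hM.R_count a ha n
  exact ⟨s, hs, Set.ext hmem⟩

lemma finite_nbrs (hM : IsTcasModel M) (a : M) (n : ℕ) : (nbrs a n).Finite := by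
  by_cases ha : a ∈ PM M
  · obtain ⟨s, -, hs⟩ := hM.exists_finset_eq_nbrs ha n
    exact hs ▸ s.finite_toSet
  · simp [hM.nbrs_eq_empty ha]

lemma ncard_nbrs (hM : IsTcasModel M) {a : M} (ha : a ∈ PM M) (n : ℕ) :
    (nbrs a n).ncard = n := by
  obtain ⟨s, hcard, hs⟩ := hM.exists_finset_eq_nbrs ha n
  rw [← hs, Set.ncard_coe_finset, hcard]

lemma finite_lowNbrs (hM : IsTcasModel M) (K : ℕ) (a : M) : (lowNbrs K a).Finite :=
  ((Set.finite_Iic K).biUnion fun n _ => hM.finite_nbrs a n).subset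
    fun _ ⟨⟨_, hn, hb⟩, hR⟩ => Set.mem_biUnion hn ⟨hb, hR⟩

lemma exists_I_pattern_not_isLow (hM : IsTcasModel M) {A₀ A₁ Y : Set M} (hA₀ : A₀.Finite)
    (hA₁ : A₁.Finite) (hA₀P : A₀ ⊆ PM M) (hA₁P : A₁ ⊆ PM M) (hdisj : Disjoint A₀ A₁)
    (hY : Y.Finite) (K : ℕ) :
    ∃ b ∈ IM M, b ∉ Y ∧ ¬ IsLow K b ∧ (∀ a ∈ A₁, RM M a b) ∧ ∀ a ∈ A₀, ¬ RM M a b := by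
  obtain ⟨a₀, ha₀, ha₀A₀, -⟩ := hM.exists_P_pattern_notMem Set.finite_empty Set.finite_empty
    (Set.empty_subset _) (Set.empty_subset _) (Set.disjoint_empty _) (by simp) hA₀
  -- `b` will be a neighbour of `a₀` outside `lowNbrs K a₀`, hence not low
  obtain ⟨a₁, ha₁, ha₁A₀, -, ha₁Y⟩ := hM.exists_P_pattern_notMem
    ((hY.union (hM.finite_lowNbrs K a₀)).inter_of_left (IM M)) Set.finite_empty
    Set.inter_subset_right (Set.empty_subset _) (Set.disjoint_empty _) (by simp) hA₀
  obtain ⟨b, hb, hbA₁, hbA₀⟩ := hM.exists_I_pattern hA₀ ((hA₁.insert a₁).insert a₀) hA₀P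
    (Set.insert_subset ha₀ (Set.insert_subset ha₁ hA₁P))
    (Set.disjoint_insert_right.2 ⟨ha₀A₀, Set.disjoint_insert_right.2 ⟨ha₁A₀, hdisj⟩⟩)
  have hR₀ : RM M a₀ b := hbA₁ a₀ (Set.mem_insert _ _)
  have hR₁ : RM M a₁ b := hbA₁ a₁ (Set.mem_insert_of_mem _ (Set.mem_insert _ _))
  refine ⟨b, hb, fun hbY => ha₁Y b ⟨Or.inl hbY, hb⟩ hR₁,
    fun hlow => ha₁Y b ⟨Or.inr ⟨hlow, hR₀⟩, hb⟩ hR₁,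
    fun a ha => hbA₁ a (Set.mem_insert_of_mem _ (Set.mem_insert_of_mem _ ha)), hbA₀⟩

end IsTcasModel

/-- Partial isomorphisms of the reduct to `P, I_0, …, I_K, R`, encoded by their graphs. Closing
domain and range under neighbours in `I_0, …, I_K` makes the `R`-pattern over the domain of any
new element of `I_0, …, I_K` empty, so such elements can always be matched. -/
structure IsClosedPartialIso (K : ℕ) (G : Set (M × M)) : Prop where
  finite : G.Finite
  injOn_fst : Set.InjOn Prod.fst G
  injOn_snd : Set.InjOn Prod.snd G
  mem_P_iff : ∀ p ∈ G, p.1 ∈ PM M ↔ p.2 ∈ PM M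
  mem_In_iff : ∀ p ∈ G, ∀ n ≤ K, p.1 ∈ InM M n ↔ p.2 ∈ InM M n
  R_iff : ∀ p ∈ G, ∀ q ∈ G, RM M p.1 q.1 ↔ RM M p.2 q.2
  nbrs_fst_subset : ∀ p ∈ G, ∀ n ≤ K, nbrs p.1 n ⊆ Prod.fst '' G
  nbrs_snd_subset : ∀ p ∈ G, ∀ n ≤ K, nbrs p.2 n ⊆ Prod.snd '' G

/-- A position with `j` rounds left in the back-and-forth game. Since at most `K - j` elements
of the domain lie outside `I_0, …, I_K`, each `I_n` with `n > K` keeps at least `j` free slots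
in the domain, which is what axiom (5) needs to match a new element of `P`. -/
structure IsEFPosition (K j : ℕ) (G : Set (M × M)) : Prop extends IsClosedPartialIso K G where
  slack : {p ∈ G | ¬ IsLow K p.1}.ncard + j ≤ K

lemma image_fst_preimage_swap {α β : Type*} (G : Set (α × β)) :
    Prod.fst '' (Prod.swap ⁻¹' G) = Prod.snd '' G := by
  rw [← Set.image_swap_eq_preimage_swap, Set.image_image]; rfl

lemma image_snd_preimage_swap {α β : Type*} (G : Set (α × β)) :
    Prod.snd '' (Prod.swap ⁻¹' G) = Prod.fst '' G := by
  rw [← Set.image_swap_eq_preimage_swap, Set.image_image]; rfl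

namespace IsClosedPartialIso

variable {K : ℕ} {G : Set (M × M)}

lemma swap (hG : IsClosedPartialIso K G) : IsClosedPartialIso K (Prod.swap ⁻¹' G) where
  finite := hG.finite.preimage Prod.swap_injective.injOn
  injOn_fst _ hp _ hq h := Prod.swap_injective (hG.injOn_snd hp hq h)
  injOn_snd _ hp _ hq h := Prod.swap_injective (hG.injOn_fst hp hq h)
  mem_P_iff p hp := (hG.mem_P_iff _ hp).symm
  mem_In_iff p hp n hn := (hG.mem_In_iff _ hp n hn).symm
  R_iff p hp q hq := (hG.R_iff _ hp _ hq).symm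
  nbrs_fst_subset p hp n hn := by
    rw [image_fst_preimage_swap]; exact hG.nbrs_snd_subset _ hp n hn
  nbrs_snd_subset p hp n hn := by
    rw [image_snd_preimage_swap]; exact hG.nbrs_fst_subset _ hp n hn

lemma isLow_iff (hG : IsClosedPartialIso K G) {p : M × M} (hp : p ∈ G) :
    IsLow K p.1 ↔ IsLow K p.2 := by
  simp only [IsLow]
  exact exists_congr fun n => and_congr_right fun hn => hG.mem_In_iff p hp n hn

lemma ncard_nbrs_inter_eq (hG : IsClosedPartialIso K G) {c d : M}
    (hpat : ∀ p ∈ G, RM M c p.1 ↔ RM M d p.2) {n : ℕ} (hn : n ≤ K) :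
    (nbrs c n ∩ Prod.fst '' G).ncard = (nbrs d n ∩ Prod.snd '' G).ncard := by
  set S := {p ∈ G | p.1 ∈ nbrs c n}
  have h₁ : nbrs c n ∩ Prod.fst '' G = Prod.fst '' S := by
    ext x
    constructor
    · rintro ⟨hx, p, hp, rfl⟩; exact ⟨p, ⟨hp, hx⟩, rfl⟩
    · rintro ⟨p, ⟨hp, hx⟩, rfl⟩; exact ⟨hx, p, hp, rfl⟩
  have h₂ : nbrs d n ∩ Prod.snd '' G = Prod.snd '' S := by
    ext y
    constructor
    · rintro ⟨⟨hy, hR⟩, p, hp, rfl⟩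
      exact ⟨p, ⟨hp, (hG.mem_In_iff p hp n hn).2 hy, (hpat p hp).2 hR⟩, rfl⟩
    · rintro ⟨p, ⟨hp, hx, hR⟩, rfl⟩
      exact ⟨⟨(hG.mem_In_iff p hp n hn).1 hx, (hpat p hp).1 hR⟩, p, hp, rfl⟩
  rw [h₁, h₂, (hG.injOn_fst.mono (Set.sep_subset _ _)).ncard_image,
    (hG.injOn_snd.mono (Set.sep_subset _ _)).ncard_image]

lemma ncard_nbrs_sdiff_eq (hM : IsTcasModel M) (hG : IsClosedPartialIso K G) {c d : M}
    (hc : c ∈ PM M) (hd : d ∈ PM M) (hpat : ∀ p ∈ G, RM M c p.1 ↔ RM M d p.2) {n : ℕ}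
    (hn : n ≤ K) : (nbrs c n \ Prod.fst '' G).ncard = (nbrs d n \ Prod.snd '' G).ncard := by
  have h₁ := Set.ncard_inter_add_ncard_sdiff_eq_ncard (nbrs c n) (Prod.fst '' G)
    (hM.finite_nbrs c n)
  have h₂ := Set.ncard_inter_add_ncard_sdiff_eq_ncard (nbrs d n) (Prod.snd '' G)
    (hM.finite_nbrs d n)
  rw [hM.ncard_nbrs hc] at h₁
  rw [hM.ncard_nbrs hd] at h₂
  linarith [hG.ncard_nbrs_inter_eq hpat hn]

lemma insert (hM : IsTcasModel M) (hG : IsClosedPartialIso K G) {c d : M}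
    (hc : c ∉ Prod.fst '' G) (hd : d ∉ Prod.snd '' G) (hP : c ∈ PM M ↔ d ∈ PM M)
    (hIn : ∀ n ≤ K, c ∈ InM M n ↔ d ∈ InM M n) (hRl : ∀ p ∈ G, RM M c p.1 ↔ RM M d p.2)
    (hRr : ∀ p ∈ G, RM M p.1 c ↔ RM M p.2 d) (hnc : ∀ n ≤ K, nbrs c n ⊆ Prod.fst '' G)
    (hnd : ∀ n ≤ K, nbrs d n ⊆ Prod.snd '' G) : IsClosedPartialIso K (insert (c, d) G) := by
  have hcd : (c, d) ∉ G := fun h => hc ⟨_, h, rfl⟩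
  refine ⟨hG.finite.insert _, (Set.injOn_insert hcd).2 ⟨hG.injOn_fst, hc⟩,
    (Set.injOn_insert hcd).2 ⟨hG.injOn_snd, hd⟩, Set.forall_mem_insert.2 ⟨hP, hG.mem_P_iff⟩,
    Set.forall_mem_insert.2 ⟨hIn, hG.mem_In_iff⟩, ?_, ?_, ?_⟩
  · refine Set.forall_mem_insert.2 ⟨Set.forall_mem_insert.2 ⟨?_, hRl⟩,
      fun p hp => Set.forall_mem_insert.2 ⟨hRr p hp, hG.R_iff p hp⟩⟩
    exact iff_of_false (hM.not_R_self c) (hM.not_R_self d)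
  · rw [Set.image_insert_eq]
    exact Set.forall_mem_insert.2 ⟨fun n hn => (hnc n hn).trans (Set.subset_insert _ _),
      fun p hp n hn => (hG.nbrs_fst_subset p hp n hn).trans (Set.subset_insert _ _)⟩
  · rw [Set.image_insert_eq]
    exact Set.forall_mem_insert.2 ⟨fun n hn => (hnd n hn).trans (Set.subset_insert _ _),
      fun p hp n hn => (hG.nbrs_snd_subset p hp n hn).trans (Set.subset_insert _ _)⟩

end IsClosedPartialIso

namespace IsEFPosition

variable {K j : ℕ} {G : Set (M × M)}

lemma mono (hG : IsEFPosition K j G) {j' : ℕ} (hj : j' ≤ j) : IsEFPosition K j' G :=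
  ⟨hG.toIsClosedPartialIso, by linarith [hG.slack]⟩

lemma swap (hG : IsEFPosition K j G) : IsEFPosition K j (Prod.swap ⁻¹' G) := by
  refine ⟨hG.toIsClosedPartialIso.swap, ?_⟩
  have : {p ∈ Prod.swap ⁻¹' G | ¬ IsLow K p.1} = Prod.swap ⁻¹' {p ∈ G | ¬ IsLow K p.1} := by
    ext p
    exact and_congr_right fun hp => not_congr (hG.isLow_iff hp).symm
  rw [this, Set.ncard_preimage_of_injective_subset_range Prod.swap_injective
    (by simp [Set.range_eq_univ.2 Prod.swap_surjective])]
  exact hG.slack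

lemma insert_pair (hM : IsTcasModel M) (hG : IsEFPosition K (j + 1) G) {c d : M}
    (hc : c ∉ Prod.fst '' G) (hd : d ∉ Prod.snd '' G) (hP : c ∈ PM M ↔ d ∈ PM M)
    (hIn : ∀ n ≤ K, c ∈ InM M n ↔ d ∈ InM M n) (hRl : ∀ p ∈ G, RM M c p.1 ↔ RM M d p.2)
    (hRr : ∀ p ∈ G, RM M p.1 c ↔ RM M p.2 d) (hnc : ∀ n ≤ K, nbrs c n ⊆ Prod.fst '' G)
    (hnd : ∀ n ≤ K, nbrs d n ⊆ Prod.snd '' G) : IsEFPosition K j (insert (c, d) G) := by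
  refine ⟨hG.toIsClosedPartialIso.insert hM hc hd hP hIn hRl hRr hnc hnd, ?_⟩
  have hsub : {p ∈ insert (c, d) G | ¬ IsLow K p.1} ⊆ insert (c, d) {p ∈ G | ¬ IsLow K p.1} :=
    fun p ⟨hp, hlow⟩ => hp.imp id fun hp => ⟨hp, hlow⟩
  have := (Set.ncard_le_ncard hsub ((hG.finite.sep _).insert _)).trans
    (Set.ncard_insert_le _ _)
  linarith [hG.slack]

lemma insert_low (hM : IsTcasModel M) (hG : IsEFPosition K j G) {c d : M} {n : ℕ} (hn : n ≤ K)
    (hc : c ∈ InM M n) (hd : d ∈ InM M n) (hcG : c ∉ Prod.fst '' G)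
    (hdG : d ∉ Prod.snd '' G) : IsEFPosition K j (insert (c, d) G) := by
  have hcP := hM.notMem_P_of_mem_In hc
  have hdP := hM.notMem_P_of_mem_In hd
  -- by closedness, no element of the domain or range is related to `c` or `d`
  have hRr : ∀ p ∈ G, RM M p.1 c ↔ RM M p.2 d := fun p hp => iff_of_false
    (fun h => hcG (hG.nbrs_fst_subset p hp n hn ⟨hc, h⟩))
    (fun h => hdG (hG.nbrs_snd_subset p hp n hn ⟨hd, h⟩))
  have hG' := hG.toIsClosedPartialIso.insert hM hcG hdG (iff_of_false hcP hdP)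
    (fun m _ => ⟨fun h => hM.eq_of_mem_In hc h ▸ hd, fun h => hM.eq_of_mem_In hd h ▸ hc⟩)
    (fun p _ => iff_of_false (fun h => hcP (hM.R_sub _ _ h).1) (fun h => hdP (hM.R_sub _ _ h).1))
    hRr (fun m _ => by simp [hM.nbrs_eq_empty hcP]) (fun m _ => by simp [hM.nbrs_eq_empty hdP])
  refine ⟨hG', ?_⟩
  have : {p ∈ insert (c, d) G | ¬ IsLow K p.1} = {p ∈ G | ¬ IsLow K p.1} := by
    ext p
    simp only [Set.mem_sep_iff, Set.mem_insert_iff]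
    constructor
    · rintro ⟨rfl | hp, hlow⟩
      · exact absurd ⟨n, hn, hc⟩ hlow
      · exact ⟨hp, hlow⟩
    · exact fun ⟨hp, hlow⟩ => ⟨Or.inr hp, hlow⟩
  rw [this]
  exact hG.slack

lemma exists_superset_nbrs_subset (hM : IsTcasModel M) (hG : IsEFPosition K j G) {c d : M}
    (hc : c ∈ PM M) (hd : d ∈ PM M) (hcG : c ∉ Prod.fst '' G) (hdG : d ∉ Prod.snd '' G)
    (hpat : ∀ p ∈ G, RM M c p.1 ↔ RM M d p.2) :
    ∃ G', G ⊆ G' ∧ IsEFPosition K j G' ∧ c ∉ Prod.fst '' G' ∧ d ∉ Prod.snd '' G' ∧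
      (∀ p ∈ G', RM M c p.1 ↔ RM M d p.2) ∧
      ∀ n ≤ K, nbrs c n ⊆ Prod.fst '' G' ∧ nbrs d n ⊆ Prod.snd '' G' := by
  -- `d` has as many new neighbours as `c` at each level (`ncard_nbrs_sdiff_eq`), so they can be
  -- paired off one at a time
  obtain ⟨k, hk⟩ : ∃ k, (lowNbrs K c \ Prod.fst '' G).ncard = k := ⟨_, rfl⟩
  induction k generalizing G with
  | zero =>
    have hlow : lowNbrs K c ⊆ Prod.fst '' G := Set.sdiff_eq_empty.1
      ((Set.ncard_eq_zero ((hM.finite_lowNbrs K c).sdiff)).1 hk)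
    refine ⟨G, subset_rfl, hG, hcG, hdG, hpat, fun n hn => ⟨fun w hw => hlow ⟨⟨n, hn, hw.1⟩, hw.2⟩,
      Set.sdiff_eq_empty.1 ((Set.ncard_eq_zero ((hM.finite_nbrs d n).sdiff)).1 ?_)⟩⟩
    rw [← hG.ncard_nbrs_sdiff_eq hM hc hd hpat hn, Set.ncard_eq_zero ((hM.finite_nbrs c n).sdiff),
      Set.sdiff_eq_empty]
    exact fun w hw => hlow ⟨⟨n, hn, hw.1⟩, hw.2⟩
  | succ k ih =>
    obtain ⟨w, ⟨⟨n, hn, hwn⟩, hcw⟩, hwG⟩ :=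
      (Set.ncard_pos ((hM.finite_lowNbrs K c).sdiff)).1 (by rw [hk]; omega)
    obtain ⟨w', ⟨hw'n, hdw'⟩, hw'G⟩ : (nbrs d n \ Prod.snd '' G).Nonempty := by
      rw [← Set.ncard_pos ((hM.finite_nbrs d n).sdiff), ← hG.ncard_nbrs_sdiff_eq hM hc hd hpat hn,
        Set.ncard_pos ((hM.finite_nbrs c n).sdiff)]
      exact ⟨w, ⟨hwn, hcw⟩, hwG⟩
    have hG₁ := hG.insert_low hM hn hwn hw'n hwG hw'G
    have hne : ∀ {x y : M}, x ∈ PM M → y ∈ InM M n → x ≠ y :=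
      fun hx hy h => hM.notMem_P_of_mem_In hy (h ▸ hx)
    obtain ⟨G', hG₁G', hG'⟩ := ih hG₁
      (by rw [Set.image_insert_eq]; exact fun h => h.elim (hne hc hwn) hcG)
      (by rw [Set.image_insert_eq]; exact fun h => h.elim (hne hd hw'n) hdG)
      (Set.forall_mem_insert.2 ⟨iff_of_true hcw hdw', hpat⟩)
      (by
        have hw : w ∈ lowNbrs K c \ Prod.fst '' G := ⟨⟨⟨n, hn, hwn⟩, hcw⟩, hwG⟩
        rw [Set.image_insert_eq, Set.insert_eq, Set.union_comm, ← Set.sdiff_sdiff,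
          Set.ncard_sdiff_singleton_of_mem hw, hk]
        rfl)
    exact ⟨G', (Set.subset_insert _ _).trans hG₁G', hG'⟩

lemma exists_superset_insert_of_mem_P (hM : IsTcasModel M) (hG : IsEFPosition K (j + 1) G)
    {c d : M} (hc : c ∈ PM M) (hd : d ∈ PM M) (hcG : c ∉ Prod.fst '' G)
    (hdG : d ∉ Prod.snd '' G) (hpat : ∀ p ∈ G, RM M c p.1 ↔ RM M d p.2) :
    ∃ G', G ⊆ G' ∧ (c, d) ∈ G' ∧ IsEFPosition K j G' := by
  obtain ⟨G₁, hGG₁, hG₁, hcG₁, hdG₁, hpat₁, hnbrs⟩ :=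
    hG.exists_superset_nbrs_subset hM hc hd hcG hdG hpat
  have hnotR : ∀ {x y : M}, y ∈ PM M → ¬ RM M x y := fun hy h =>
    hM.notMem_I_of_mem_P hy (hM.R_sub _ _ h).2
  refine ⟨insert (c, d) G₁, hGG₁.trans (Set.subset_insert _ _), Set.mem_insert _ _,
    hG₁.insert_pair hM hcG₁ hdG₁ (iff_of_true hc hd)
      (fun n _ => iff_of_false (hM.notMem_P_of_mem_In · hc) (hM.notMem_P_of_mem_In · hd))
      hpat₁ (fun _ _ => iff_of_false (hnotR hc) (hnotR hd)) (fun n hn => (hnbrs n hn).1)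
      (fun n hn => (hnbrs n hn).2)⟩

lemma ncard_image_R_inter_In_le (hM : IsTcasModel M) (hG : IsEFPosition K (j + 1) G) {c : M}
    (hc : c ∈ PM M) (m : ℕ) : (Prod.snd '' {p ∈ G | RM M c p.1} ∩ InM M m).ncard ≤ m := by
  rcases le_or_gt m K with hm | hm
  · set S := {p ∈ G | p.1 ∈ nbrs c m}
    have hsub : Prod.snd '' {p ∈ G | RM M c p.1} ∩ InM M m ⊆ Prod.snd '' S := by
      rintro _ ⟨⟨p, ⟨hp, hR⟩, rfl⟩, hpm⟩
      exact ⟨p, ⟨hp, (hG.mem_In_iff p hp m hm).2 hpm, hR⟩, rfl⟩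
    calc _ ≤ (Prod.snd '' S).ncard := Set.ncard_le_ncard hsub ((hG.finite.sep _).image _)
      _ ≤ S.ncard := Set.ncard_image_le (hG.finite.sep _)
      _ = (Prod.fst '' S).ncard := ((hG.injOn_fst.mono (Set.sep_subset _ _)).ncard_image).symm
      _ ≤ (nbrs c m).ncard :=
        Set.ncard_le_ncard (by rintro _ ⟨p, ⟨-, hp⟩, rfl⟩; exact hp) (hM.finite_nbrs c m)
      _ = m := hM.ncard_nbrs hc m
  · -- the elements of `I_m` in the range come from outside `I_0, …, I_K`
    set S := {p ∈ G | ¬ IsLow K p.1}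
    have hsub : Prod.snd '' {p ∈ G | RM M c p.1} ∩ InM M m ⊆ Prod.snd '' S := by
      rintro _ ⟨⟨p, ⟨hp, -⟩, rfl⟩, hpm⟩
      refine ⟨p, ⟨hp, fun hlow => ?_⟩, rfl⟩
      obtain ⟨n, hn, hpn⟩ := (hG.isLow_iff hp).1 hlow
      exact absurd (hM.eq_of_mem_In hpm hpn) (by omega)
    have := (Set.ncard_le_ncard hsub ((hG.finite.sep _).image _)).trans
      (Set.ncard_image_le (hG.finite.sep _))
    linarith [hG.slack]

lemma exists_extend_of_mem_P (hM : IsTcasModel M) (hG : IsEFPosition K (j + 1) G) {c : M}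
    (hc : c ∈ PM M) (hcG : c ∉ Prod.fst '' G) :
    ∃ d G', G ⊆ G' ∧ (c, d) ∈ G' ∧ IsEFPosition K j G' := by
  have hI : ∀ p ∈ G, RM M c p.1 → p.2 ∈ IM M := fun p hp h =>
    hM.mem_I_of_notMem_P fun hP =>
      hM.notMem_I_of_mem_P ((hG.mem_P_iff p hp).2 hP) (hM.R_sub _ _ h).2
  obtain ⟨d, hd, hdG, hd₁, hd₀⟩ := hM.exists_P_pattern_notMem
    (B₀ := Prod.snd '' {p ∈ G | p.2 ∈ IM M ∧ ¬ RM M c p.1})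
    (B₁ := Prod.snd '' {p ∈ G | RM M c p.1}) ((hG.finite.sep _).image _)
    ((hG.finite.sep _).image _) (by rintro _ ⟨p, ⟨-, hp, -⟩, rfl⟩; exact hp)
    (by rintro _ ⟨p, ⟨hp, hR⟩, rfl⟩; exact hI p hp hR)
    (Set.disjoint_left.2 <| by
      rintro _ ⟨p, ⟨hp, -, hR⟩, rfl⟩ ⟨q, ⟨hq, hR'⟩, hpq⟩
      exact hR (hG.injOn_snd hq hp hpq ▸ hR'))
    (hG.ncard_image_R_inter_In_le hM hc) (hG.finite.image Prod.snd)
  refine ⟨d, hG.exists_superset_insert_of_mem_P hM hc hd hcG hdG fun p hp => ⟨fun h =>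
    hd₁ _ ⟨p, ⟨hp, h⟩, rfl⟩, fun h => ?_⟩⟩
  by_contra hR
  exact hd₀ _ ⟨p, ⟨hp, (hM.R_sub _ _ h).2, hR⟩, rfl⟩ h

lemma exists_extend_of_isLow (hM : IsTcasModel M) (hG : IsEFPosition K j G) {c : M}
    (hc : IsLow K c) (hcG : c ∉ Prod.fst '' G) :
    ∃ d G', G ⊆ G' ∧ (c, d) ∈ G' ∧ IsEFPosition K j G' := by
  obtain ⟨n, hn, hcn⟩ := hc
  obtain ⟨d, hdn, hdG⟩ := ((hM.In_inf n).sdiff (hG.finite.image Prod.snd)).nonempty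
  exact ⟨d, _, Set.subset_insert _ _, Set.mem_insert _ _, hG.insert_low hM hn hcn hdn hcG hdG⟩

lemma exists_extend_of_not_isLow (hM : IsTcasModel M) (hG : IsEFPosition K (j + 1) G) {c : M}
    (hcI : c ∈ IM M) (hc : ¬ IsLow K c) (hcG : c ∉ Prod.fst '' G) :
    ∃ d G', G ⊆ G' ∧ (c, d) ∈ G' ∧ IsEFPosition K j G' := by
  obtain ⟨d, hdI, hdG, hd, hd₁, hd₀⟩ := hM.exists_I_pattern_not_isLow
    (A₀ := Prod.snd '' {p ∈ G | p.2 ∈ PM M ∧ ¬ RM M p.1 c})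
    (A₁ := Prod.snd '' {p ∈ G | p.2 ∈ PM M ∧ RM M p.1 c}) ((hG.finite.sep _).image _)
    ((hG.finite.sep _).image _) (by rintro _ ⟨p, ⟨-, hp, -⟩, rfl⟩; exact hp)
    (by rintro _ ⟨p, ⟨-, hp, -⟩, rfl⟩; exact hp)
    (Set.disjoint_left.2 <| by
      rintro _ ⟨p, ⟨hp, -, hR⟩, rfl⟩ ⟨q, ⟨hq, -, hR'⟩, hpq⟩
      exact hR (hG.injOn_snd hq hp hpq ▸ hR'))
    (hG.finite.image Prod.snd) K
  have hcP : c ∉ PM M := fun h => hM.notMem_I_of_mem_P h hcI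
  have hdP : d ∉ PM M := fun h => hM.notMem_I_of_mem_P h hdI
  have hRr : ∀ p ∈ G, RM M p.1 c ↔ RM M p.2 d := by
    intro p hp
    by_cases hpP : p.2 ∈ PM M
    · exact ⟨fun h => hd₁ _ ⟨p, ⟨hp, hpP, h⟩, rfl⟩,
        fun h => by_contra fun hR => hd₀ _ ⟨p, ⟨hp, hpP, hR⟩, rfl⟩ h⟩
    · exact iff_of_false (fun h => hpP ((hG.mem_P_iff p hp).1 (hM.R_sub _ _ h).1))
        (fun h => hpP (hM.R_sub _ _ h).1)
  refine ⟨d, _, Set.subset_insert _ _, Set.mem_insert _ _, hG.insert_pair hM hcG hdG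
    (iff_of_false hcP hdP) (fun n hn => iff_of_false (fun h => hc ⟨n, hn, h⟩)
      (fun h => hd ⟨n, hn, h⟩))
    (fun _ _ => iff_of_false (fun h => hcP (hM.R_sub _ _ h).1) (fun h => hdP (hM.R_sub _ _ h).1))
    hRr (fun n _ => by simp [hM.nbrs_eq_empty hcP]) (fun n _ => by simp [hM.nbrs_eq_empty hdP])⟩

lemma exists_extend (hM : IsTcasModel M) (hG : IsEFPosition K (j + 1) G) (c : M) :
    ∃ d G', G ⊆ G' ∧ (c, d) ∈ G' ∧ IsEFPosition K j G' := by
  by_cases hcG : c ∈ Prod.fst '' G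
  · obtain ⟨⟨_, d⟩, hp, rfl⟩ := hcG
    exact ⟨d, G, subset_rfl, hp, hG.mono (Nat.le_succ j)⟩
  by_cases hcP : c ∈ PM M
  · exact hG.exists_extend_of_mem_P hM hcP hcG
  by_cases hc : IsLow K c
  · obtain ⟨d, G', hGG', hcd, hG'⟩ := hG.exists_extend_of_isLow hM hc hcG
    exact ⟨d, G', hGG', hcd, hG'.mono (Nat.le_succ j)⟩
  · exact hG.exists_extend_of_not_isLow hM (hM.mem_I_of_notMem_P hcP) hc hcG

lemma exists_extend_back (hM : IsTcasModel M) (hG : IsEFPosition K (j + 1) G) (d : M) :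
    ∃ c G', G ⊆ G' ∧ (c, d) ∈ G' ∧ IsEFPosition K j G' := by
  obtain ⟨c, G', hGG', hdc, hG'⟩ := hG.swap.exists_extend hM d
  exact ⟨c, Prod.swap ⁻¹' G', fun p hp => hGG' (by simpa using hp), hdc, hG'.swap⟩

end IsEFPosition

def relIdx : ∀ {l : ℕ}, Lcas.Relations l → ℕ
  | 1, CasRel1.In n => n
  | _, _ => 0

/-- Bounds both the number of rounds and the levels `I_n` a position has to respect. -/
def rank {α : Type*} : ∀ {n : ℕ}, Lcas.BoundedFormula α n → ℕ
  | _, .falsum => 0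
  | _, .equal _ _ => 0
  | _, .rel R _ => relIdx R
  | _, .imp φ ψ => max (rank φ) (rank ψ)
  | _, .all φ => rank φ + 1

lemma FirstOrder.Language.Term.realize_mem_of_forall_mem {β : Type*} {G : Set (M × M)}
    (t : Lcas.Term β) {v w : β → M} (h : ∀ b, (v b, w b) ∈ G) : (t.realize v, t.realize w) ∈ G := by
  cases t with
  | var b => exact h b
  | func f _ => exact (f : Empty).elim

namespace IsClosedPartialIso

variable {K : ℕ} {G : Set (M × M)}

lemma mem_I_iff (hM : IsTcasModel M) (hG : IsClosedPartialIso K G) {p : M × M} (hp : p ∈ G) :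
    p.1 ∈ IM M ↔ p.2 ∈ IM M := by
  rw [← not_iff_not, ← hM.part, ← hM.part]
  exact hG.mem_P_iff p hp

lemma relMap_iff (hM : IsTcasModel M) (hG : IsClosedPartialIso K G) :
    ∀ {l : ℕ} (R : Lcas.Relations l), relIdx R ≤ K → ∀ {xs ys : Fin l → M},
      (∀ i, (xs i, ys i) ∈ G) → (Structure.RelMap R xs ↔ Structure.RelMap R ys)
  | 1, R, hR, xs, ys, h => by
    have hx : xs = ![xs 0] := by ext i; fin_cases i; rfl
    have hy : ys = ![ys 0] := by ext i; fin_cases i; rfl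
    rw [hx, hy]
    match R with
    | CasRel1.P => exact hG.mem_P_iff _ (h 0)
    | CasRel1.I => exact hG.mem_I_iff hM (h 0)
    | CasRel1.In n => exact hG.mem_In_iff _ (h 0) n hR
  | 2, _, _, xs, ys, h => by
    have hx : xs = ![xs 0, xs 1] := by ext i; fin_cases i <;> rfl
    have hy : ys = ![ys 0, ys 1] := by ext i; fin_cases i <;> rfl
    rw [hx, hy]
    exact hG.R_iff _ (h 0) _ (h 1)
  | 0, R, _, _, _, _ => nomatch R
  | _ + 3, R, _, _, _, _ => nomatch R

end IsClosedPartialIso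

lemma IsEFPosition.realize_iff (hM : IsTcasModel M) {K : ℕ} {α : Type*} :
    ∀ {n : ℕ} (φ : Lcas.BoundedFormula α n) {j : ℕ} {G : Set (M × M)}, IsEFPosition K j G →
      rank φ ≤ j → j ≤ K → ∀ {v w : α → M} {xs ys : Fin n → M}, (∀ a, (v a, w a) ∈ G) →
      (∀ i, (xs i, ys i) ∈ G) → (φ.Realize v xs ↔ φ.Realize w ys)
  | _, .falsum, _, _, _, _, _, _, _, _, _, _, _ => Iff.rfl
  | _, .equal t₁ t₂, _, G, hG, _, _, v, w, xs, ys, hv, hxs => by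
    have h : ∀ b, (Sum.elim v xs b, Sum.elim w ys b) ∈ G := fun b => b.rec hv hxs
    have h₁ := t₁.realize_mem_of_forall_mem h
    have h₂ := t₂.realize_mem_of_forall_mem h
    exact ⟨fun he => congrArg Prod.snd (hG.injOn_fst h₁ h₂ he),
      fun he => congrArg Prod.fst (hG.injOn_snd h₁ h₂ he)⟩
  | _, .rel R ts, _, G, hG, hφ, hjK, v, w, xs, ys, hv, hxs => by
    have h : ∀ b, (Sum.elim v xs b, Sum.elim w ys b) ∈ G := fun b => b.rec hv hxs
    exact hG.relMap_iff hM R (hφ.trans hjK) fun i => (ts i).realize_mem_of_forall_mem h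
  | _, .imp φ ψ, _, _, hG, hφ, hjK, _, _, _, _, hv, hxs =>
    imp_congr (realize_iff hM φ hG (le_of_max_le_left hφ) hjK hv hxs)
      (realize_iff hM ψ hG (le_of_max_le_right hφ) hjK hv hxs)
  | _, .all φ, j + 1, _, hG, hφ, hjK, _, _, xs, ys, hv, hxs => by
    have ih : ∀ {G'} {a b : M}, IsEFPosition K j G' → _ ⊆ G' → (a, b) ∈ G' →
        (φ.Realize _ (Fin.snoc xs a) ↔ φ.Realize _ (Fin.snoc ys b)) :=
      fun hG' hGG' hab => realize_iff hM φ hG' (Nat.le_of_succ_le_succ hφ) (by omega)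
        (fun a => hGG' (hv a)) (Fin.lastCases (by simpa using hab)
          fun i => by simpa using hGG' (hxs i))
    refine ⟨fun h b => ?_, fun h a => ?_⟩
    · obtain ⟨a, G', hGG', hab, hG'⟩ := hG.exists_extend_back hM b
      exact (ih hG' hGG' hab).1 (h a)
    · obtain ⟨b, G', hGG', hab, hG'⟩ := hG.exists_extend hM a
      exact (ih hG' hGG' hab).2 (h b)
  | _, .all _, 0, _, _, hφ, _, _, _, _, _, _, _ => absurd hφ (Nat.not_succ_le_zero _)

lemma IsTcasModel.exists_closed_superset (hM : IsTcasModel M) {F : Set M} (hF : F.Finite)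
    (K : ℕ) : ∃ C, F ⊆ C ∧ C.Finite ∧ (∀ x ∈ C, ∀ n ≤ K, nbrs x n ⊆ C) ∧
      {x ∈ C | ¬ IsLow K x} ⊆ F := by
  refine ⟨F ∪ ⋃ a ∈ F, lowNbrs K a, Set.subset_union_left,
    hF.union (hF.biUnion fun a _ => hM.finite_lowNbrs K a), ?_, ?_⟩
  · rintro x (hx | hx) n hn w hw
    · exact Or.inr (Set.mem_biUnion hx ⟨⟨n, hn, hw.1⟩, hw.2⟩)
    · obtain ⟨a, -, -, hax⟩ := Set.mem_iUnion₂.1 hx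
      exact absurd (hM.R_sub _ _ hw.2).1 fun hxP => hM.notMem_I_of_mem_P hxP (hM.R_sub _ _ hax).2
  · rintro x ⟨hx | hx, hlow⟩
    · exact hx
    · obtain ⟨a, -, hxlow, -⟩ := Set.mem_iUnion₂.1 hx
      exact absurd hxlow hlow

lemma isEFPosition_diag {K j : ℕ} {C : Set M} (hC : C.Finite)
    (hclosed : ∀ x ∈ C, ∀ n ≤ K, nbrs x n ⊆ C) (hslack : {x ∈ C | ¬ IsLow K x}.ncard + j ≤ K) :
    IsEFPosition K j ((fun x => (x, x)) '' C) := by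
  have hinj : Function.Injective fun x : M => (x, x) := fun _ _ h => congrArg Prod.fst h
  have hfst : Prod.fst '' ((fun x => (x, x)) '' C) = C := by
    rw [Set.image_image]; exact Set.image_id _
  have hsnd : Prod.snd '' ((fun x => (x, x)) '' C) = C := by
    rw [Set.image_image]; exact Set.image_id _
  refine ⟨⟨hC.image _, ?_, ?_, ?_, ?_, ?_, ?_, ?_⟩, ?_⟩
  · rintro _ ⟨x, -, rfl⟩ _ ⟨y, -, rfl⟩ h; exact congrArg (fun x : M => (x, x)) h
  · rintro _ ⟨x, -, rfl⟩ _ ⟨y, -, rfl⟩ h; exact congrArg (fun x : M => (x, x)) h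
  · rintro _ ⟨x, -, rfl⟩; exact Iff.rfl
  · rintro _ ⟨x, -, rfl⟩ n _; exact Iff.rfl
  · rintro _ ⟨x, -, rfl⟩ _ ⟨y, -, rfl⟩; exact Iff.rfl
  · rintro _ ⟨x, hx, rfl⟩ n hn; rw [hfst]; exact hclosed x hx n hn
  · rintro _ ⟨x, hx, rfl⟩ n hn; rw [hsnd]; exact hclosed x hx n hn
  · have : {p ∈ (fun x => (x, x)) '' C | ¬ IsLow K p.1} =
        (fun x => (x, x)) '' {x ∈ C | ¬ IsLow K x} := by
      ext p
      constructor
      · rintro ⟨⟨x, hx, rfl⟩, hlow⟩; exact ⟨x, ⟨hx, hlow⟩, rfl⟩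
      · rintro ⟨x, ⟨hx, hlow⟩, rfl⟩; exact ⟨⟨x, hx, rfl⟩, hlow⟩
    rwa [this, Set.ncard_image_of_injective _ hinj]

theorem IsTcasModel.realizesAt_iff_of_R_iff (hM : IsTcasModel M)
    (φ : Lcas.Formula (M ⊕ Fin 1)) :
    ∃ C : Set M, C.Finite ∧ ∀ a b : M, a ∈ PM M → b ∈ PM M → a ∉ C → b ∉ C →
      (∀ x ∈ C, RM M a x ↔ RM M b x) → (RealizesAt M φ a ↔ RealizesAt M φ b) := by
  classical
  set s : Set (M ⊕ Fin 1) := ↑φ.freeVarFinset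
  set ψ := φ.restrictFreeVar (Set.inclusion (subset_refl s))
  set F : Set M := Sum.inl ⁻¹' s
  have hF : F.Finite := φ.freeVarFinset.finite_toSet.preimage Sum.inl_injective.injOn
  obtain ⟨K, hK⟩ : ∃ K, K = F.ncard + rank ψ + 1 := ⟨_, rfl⟩
  obtain ⟨C, hFC, hC, hclosed, hlow⟩ := hM.exists_closed_superset hF K
  refine ⟨C, hC, fun a b ha hb haC hbC hab => ?_⟩
  have hG₀ : IsEFPosition K (rank ψ + 1) ((fun x => (x, x)) '' C) :=
    isEFPosition_diag hC hclosed (by have := Set.ncard_le_ncard hlow hF; omega)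
  obtain ⟨G, hG₀G, habG, hG⟩ := hG₀.exists_superset_insert_of_mem_P hM ha hb
    (by rwa [Set.image_image, Set.image_id']) (by rwa [Set.image_image, Set.image_id'])
    (by rintro _ ⟨x, hx, rfl⟩; exact hab x hx)
  have h := hG.realize_iff hM ψ le_rfl (by omega) (v := fun i => Sum.elim id (fun _ => a) i.1)
    (w := fun i => Sum.elim id (fun _ => b) i.1) (xs := default) (ys := default) ?_ finZeroElim
  · have hψ : ∀ c : M, ψ.Realize (fun i => Sum.elim id (fun _ => c) i.1) default ↔
        RealizesAt M φ c := fun c => BoundedFormula.realize_restrictFreeVar _ fun _ => rfl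
    rwa [hψ, hψ] at h
  · rintro ⟨m | i, hi⟩
    · exact hG₀G ⟨m, hFC hi, rfl⟩
    · exact habG

@[simp] lemma realizesAt_fP {a : M} : RealizesAt M (fP M) a ↔ a ∈ PM M := Formula.realize_rel₁

@[simp] lemma realizesAt_fNe {a b : M} : RealizesAt M (fNe b) a ↔ a ≠ b := by
  simp [RealizesAt, fNe, Term.equal, Formula.Realize]

@[simp] lemma realizesAt_fRright {a b : M} : RealizesAt M (fRright b) a ↔ RM M a b :=
  Formula.realize_rel₂

@[simp] lemma realizesAt_not {φ : Lcas.Formula (M ⊕ Fin 1)} {a : M} :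
    RealizesAt M φ.not a ↔ ¬ RealizesAt M φ a := Formula.realize_not

lemma fNe_injective : Function.Injective (fNe : M → Lcas.Formula (M ⊕ Fin 1)) := by
  intro a b h
  have : RealizesAt M (fNe b) a ↔ RealizesAt M (fNe a) a := h ▸ Iff.rfl
  simpa using this

lemma fRright_injective {α : Type*} :
    Function.Injective (fRright : α → Lcas.Formula (α ⊕ Fin 1)) := by
  intro a b h
  injection h with _ _ _ hts
  simpa using congrFun hts 1

variable (M) in
def DeterminesFormulas (p : Set (Lcas.Formula (M ⊕ Fin 1))) : Prop :=
  ∀ φ, ∃ s ⊆ p, s.Finite ∧ ∀ a b, (∀ ψ ∈ s, RealizesAt M ψ a) → (∀ ψ ∈ s, RealizesAt M ψ b) →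
    (RealizesAt M φ a ↔ RealizesAt M φ b)

variable (M) in
def consequences (p : Set (Lcas.Formula (M ⊕ Fin 1))) : Set (Lcas.Formula (M ⊕ Fin 1)) :=
  {φ | ∃ s ⊆ p, s.Finite ∧ ∀ a, (∀ ψ ∈ s, RealizesAt M ψ a) → RealizesAt M φ a}

lemma finSatIn_iff {p : Set (Lcas.Formula (M ⊕ Fin 1))} :
    FinSatIn M p ↔ ∀ s ⊆ p, s.Finite → ∃ a, ∀ φ ∈ s, RealizesAt M φ a :=
  ⟨fun hp s hsp hs => by simpa using hp hs.toFinset (by simpa),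
    fun hp s hsp => hp s hsp s.finite_toSet⟩

section Types

variable {p q : Set (Lcas.Formula (M ⊕ Fin 1))}

lemma subset_consequences : p ⊆ consequences M p :=
  fun φ hφ => ⟨{φ}, by simpa, Set.finite_singleton φ, fun _ h => h φ rfl⟩

lemma FinSatIn.consequences (hp : FinSatIn M p) : FinSatIn M (consequences M p) := by
  rw [finSatIn_iff] at hp ⊢
  intro t ht htfin
  have ht' : ∀ φ ∈ t, ∃ s ⊆ p, s.Finite ∧ ∀ a, (∀ ψ ∈ s, RealizesAt M ψ a) → RealizesAt M φ a :=
    ht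
  choose! s hsp hs hst using ht'
  obtain ⟨a, ha⟩ := hp (⋃ φ ∈ t, s φ) (Set.iUnion₂_subset hsp)
    (htfin.biUnion fun φ hφ => hs φ hφ)
  exact ⟨a, fun φ hφ => hst φ hφ a fun ψ hψ => ha ψ (Set.mem_biUnion hφ hψ)⟩

lemma DeterminesFormulas.subset_consequences (hdet : DeterminesFormulas M p)
    (hq : FinSatIn M q) (hpq : p ⊆ q) : q ⊆ consequences M p := by
  intro φ hφ
  obtain ⟨s, hsp, hs, hdec⟩ := hdet φ
  obtain ⟨a, ha⟩ := finSatIn_iff.1 hq (insert φ s) (Set.insert_subset hφ (hsp.trans hpq))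
    (hs.insert φ)
  exact ⟨s, hsp, hs, fun b hb =>
    (hdec a b (fun ψ hψ => ha ψ (Set.mem_insert_of_mem _ hψ)) hb).1 (ha φ (Set.mem_insert _ _))⟩

lemma existsUnique_completion (hp : FinSatIn M p) (hdet : DeterminesFormulas M p) :
    ∃! q, IsCompleteTypeOver M q ∧ p ⊆ q :=
  ⟨consequences M p, ⟨⟨hp.consequences, fun _ hq hsub => (Set.Subset.antisymm
      (hdet.subset_consequences hq (subset_consequences.trans hsub)) hsub)⟩, subset_consequences⟩,
    fun _ ⟨hq, hpq⟩ => (hq.2 _ hp.consequences (hdet.subset_consequences hq.1 hpq)).symm⟩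

lemma IsCompleteTypeOver.not_mem_of_notMem (hq : IsCompleteTypeOver M q)
    {φ : Lcas.Formula (M ⊕ Fin 1)} (hφ : φ ∉ q) : φ.not ∈ q := by
  have hins : ¬ FinSatIn M (insert φ q) := fun h =>
    hφ (hq.2 _ h (Set.subset_insert _ _) ▸ Set.mem_insert _ _)
  simp only [finSatIn_iff, not_forall, not_exists] at hins
  obtain ⟨s, hsq, hs, hnot⟩ := hins
  -- the realizations of the finite part `s \ {φ}` of `q` all fail `φ`
  refine hq.2 _ (finSatIn_iff.2 fun t htq ht => ?_) (Set.subset_insert _ _) ▸ Set.mem_insert _ _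
  obtain ⟨a, ha⟩ := finSatIn_iff.1 hq.1 ((t \ {φ.not}) ∪ (s \ {φ}))
    (Set.union_subset (fun ψ hψ => (htq hψ.1).resolve_left hψ.2)
      (fun ψ hψ => (hsq hψ.1).resolve_left hψ.2)) (ht.sdiff.union hs.sdiff)
  have haφ : ¬ RealizesAt M φ a := fun h => by
    obtain ⟨ψ, hψs, hψa⟩ := hnot a
    by_cases hψφ : ψ = φ
    · exact hψa (hψφ ▸ h)
    · exact hψa (ha ψ (Or.inr ⟨hψs, hψφ⟩))
  refine ⟨a, fun ψ hψ => ?_⟩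
  by_cases hψφ : ψ = φ.not
  · simpa [hψφ] using haφ
  · exact ha ψ (Or.inl ⟨hψ, hψφ⟩)

lemma FinSatIn.not_notMem_of_mem (hq : FinSatIn M q) {φ : Lcas.Formula (M ⊕ Fin 1)} (hφ : φ ∈ q) :
    φ.not ∉ q := fun hnφ => by
  obtain ⟨a, ha⟩ := finSatIn_iff.1 hq {φ, φ.not} (Set.insert_subset hφ (by simpa))
    (Set.toFinite _)
  exact (realizesAt_not.1 (ha _ (Set.mem_insert_of_mem _ rfl))) (ha φ (Set.mem_insert _ _))

end Types

lemma ncard_le_of_subset_of_mk_le {α : Type*} {S T : Set α} (hS : S.Finite) (hST : S ⊆ T)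
    {n : ℕ} (hT : #T ≤ n) : S.ncard ≤ n := by
  rw [Set.ncard_eq_toFinset_card S hS]
  exact Cardinal.mk_le_iff_forall_finset_subset_card_le.1 hT _ (by simpa using hST)

section TypeB

variable {B : Set M} {q : Set (Lcas.Formula (M ⊕ Fin 1))}

lemma fP_mem_typeB : fP M ∈ typeB B := Or.inl (Or.inl (Or.inl rfl))

lemma fNe_mem_typeB {a : M} (ha : a ∈ PM M) : fNe a ∈ typeB B :=
  Or.inl (Or.inl (Or.inr ⟨a, ha, rfl⟩))

lemma fRright_mem_typeB {b : M} (hb : b ∈ B) : fRright b ∈ typeB B := Or.inl (Or.inr ⟨b, hb, rfl⟩)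

lemma not_fRright_mem_typeB {b : M} (hb : b ∈ IM M \ B) : (fRright b).not ∈ typeB B :=
  Or.inr ⟨b, hb, rfl⟩

lemma IsTcasModel.finSatIn_typeB (hM : IsTcasModel M) (hBI : B ⊆ IM M)
    (hB : ∀ n : ℕ, #(↥(B ∩ InM M n)) ≤ (n : Cardinal)) : FinSatIn M (typeB B) := by
  refine finSatIn_iff.2 fun s hs hsfin => ?_
  have hB₁ : {b ∈ B | fRright b ∈ s}.Finite :=
    (hsfin.preimage fRright_injective.injOn).subset fun b hb => hb.2
  have hB₀ : {b ∈ IM M \ B | (fRright b).not ∈ s}.Finite :=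
    (hsfin.preimage (fun b _ b' _ h => fRright_injective (by injection h))).subset
      fun b hb => hb.2
  obtain ⟨a, ha, haA, ha₁, ha₀⟩ := hM.exists_P_pattern_notMem hB₀ hB₁
    (fun b hb => hb.1.1) (fun b hb => hBI hb.1)
    (Set.disjoint_left.2 fun b hb₀ hb₁ => hb₀.1.2 hb₁.1)
    (fun n => ncard_le_of_subset_of_mk_le (hB₁.inter_of_left _)
      (Set.inter_subset_inter_left _ (Set.sep_subset _ _)) (hB n))
    (hsfin.preimage fNe_injective.injOn)
  refine ⟨a, fun φ hφ => ?_⟩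
  rcases hs hφ with ((rfl | ⟨b, -, rfl⟩) | ⟨b, hb, rfl⟩) | ⟨b, hb, rfl⟩
  · simpa using ha
  · simpa using fun h : a = b => haA (h ▸ hφ)
  · simpa using ha₁ b ⟨hb, hφ⟩
  · simpa using ha₀ b ⟨hb, hφ⟩

lemma IsTcasModel.determinesFormulas_typeB (hM : IsTcasModel M) (B : Set M) :
    DeterminesFormulas M (typeB B) := by
  intro φ
  obtain ⟨C, hC, hφ⟩ := hM.realizesAt_iff_of_R_iff φ
  set s := {fP M} ∪ fNe '' (C ∩ PM M) ∪ fRright '' (C ∩ B) ∪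
    (fun b => (fRright b).not) '' (C ∩ (IM M \ B))
  have hs : s ⊆ typeB B := by
    rintro _ (((rfl | ⟨a, ⟨-, ha⟩, rfl⟩) | ⟨b, ⟨-, hb⟩, rfl⟩) | ⟨b, ⟨-, hb⟩, rfl⟩)
    · exact fP_mem_typeB
    · exact fNe_mem_typeB ha
    · exact fRright_mem_typeB hb
    · exact not_fRright_mem_typeB hb
  have hreal : ∀ a, (∀ ψ ∈ s, RealizesAt M ψ a) →
      a ∈ PM M ∧ a ∉ C ∧ ∀ x ∈ C, (RM M a x ↔ x ∈ B) := by
    intro a ha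
    have haP : a ∈ PM M := by simpa using ha _ (Or.inl (Or.inl (Or.inl rfl)))
    refine ⟨haP, fun haC => ?_, fun x hx => ⟨fun h => by_contra fun hxB => ?_, fun hxB => ?_⟩⟩
    · simpa using ha _ (Or.inl (Or.inl (Or.inr ⟨a, ⟨haC, haP⟩, rfl⟩)))
    · simpa [h] using ha _ (Or.inr ⟨x, ⟨hx, (hM.R_sub _ _ h).2, hxB⟩, rfl⟩)
    · simpa using ha _ (Or.inl (Or.inr ⟨x, ⟨hx, hxB⟩, rfl⟩))
  refine ⟨s, hs, ?_, fun a b ha hb => ?_⟩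
  · exact (((Set.finite_singleton _).union ((hC.inter_of_left _).image _)).union
      ((hC.inter_of_left _).image _)).union ((hC.inter_of_left _).image _)
  obtain ⟨haP, haC, haR⟩ := hreal a ha
  obtain ⟨hbP, hbC, hbR⟩ := hreal b hb
  exact hφ a b haP hbP haC hbC fun x hx => (haR x hx).trans (hbR x hx).symm

lemma FinSatIn.mk_inter_In_le (hM : IsTcasModel M) (hq : FinSatIn M q) (hP : fP M ∈ q)
    (n : ℕ) : #(↥({b ∈ IM M | fRright b ∈ q} ∩ InM M n)) ≤ n := by
  refine Cardinal.mk_le_iff_forall_finset_subset_card_le.2 fun t ht => ?_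
  obtain ⟨a, ha⟩ := finSatIn_iff.1 hq (insert (fP M) (fRright '' t))
    (Set.insert_subset hP (by rintro _ ⟨b, hb, rfl⟩; exact (ht hb).1.2))
    ((t.finite_toSet.image _).insert _)
  have haP : a ∈ PM M := by simpa using ha _ (Set.mem_insert _ _)
  have hnbrs : (t : Set M) ⊆ nbrs a n := fun b hb =>
    ⟨(ht hb).2, by simpa using ha _ (Set.mem_insert_of_mem _ ⟨b, hb, rfl⟩)⟩
  rw [← Set.ncard_coe_finset, ← hM.ncard_nbrs haP n]
  exact Set.ncard_le_ncard hnbrs (hM.finite_nbrs a n)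

lemma IsCompleteTypeOver.typeB_subset (hq : IsCompleteTypeOver M q) (hna : IsNonalgebraic M q)
    (hP : fP M ∈ q) : typeB {b ∈ IM M | fRright b ∈ q} ⊆ q := by
  rintro _ (((rfl | ⟨a, -, rfl⟩) | ⟨b, hb, rfl⟩) | ⟨b, hb, rfl⟩)
  · exact hP
  · exact hna a
  · exact hb.2
  · exact hq.not_mem_of_notMem fun h => hb.2 ⟨hb.1, h⟩

lemma FinSatIn.eq_of_typeB_subset (hq : FinSatIn M q) (hBI : B ⊆ IM M) (hBq : typeB B ⊆ q) :
    B = {b ∈ IM M | fRright b ∈ q} := by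
  ext b
  refine ⟨fun hb => ⟨hBI hb, hBq (fRright_mem_typeB hb)⟩, fun ⟨hbI, hbq⟩ => ?_⟩
  by_contra hbB
  exact hq.not_notMem_of_mem hbq (hBq (not_fRright_mem_typeB ⟨hbI, hbB⟩))

end TypeB

/-- for each `B ⊆ I^M` with `|B ∩ I_n^M| ≤ n` for all `n`, `p_B` is finitely
satisfiable in `M` and has a unique extension to a complete 1-type over `M`; and every
nonalgebraic complete 1-type over `M` containing `P(x)` arises this way from a unique
such `B`. -/
theorem stmt8 (M : Type u) [Lcas.Structure M] (hM : IsTcasModel M) :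
    (∀ B : Set M, B ⊆ IM M → (∀ n : ℕ, #(↥(B ∩ InM M n)) ≤ (n : Cardinal)) →
      FinSatIn M (typeB B) ∧
      ∃! q : Set (Lcas.Formula (M ⊕ Fin 1)), IsCompleteTypeOver M q ∧ typeB B ⊆ q) ∧
    ∀ q : Set (Lcas.Formula (M ⊕ Fin 1)), IsCompleteTypeOver M q → IsNonalgebraic M q →
      fP M ∈ q →
      ∃! B : Set M, (B ⊆ IM M ∧ (∀ n : ℕ, #(↥(B ∩ InM M n)) ≤ (n : Cardinal))) ∧
        typeB B ⊆ q := by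
  refine ⟨fun B hBI hB => ⟨hM.finSatIn_typeB hBI hB,
    existsUnique_completion (hM.finSatIn_typeB hBI hB) (hM.determinesFormulas_typeB B)⟩,
    fun q hq hna hP => ⟨{b ∈ IM M | fRright b ∈ q},
      ⟨⟨Set.sep_subset _ _, hq.1.mk_inter_In_le hM hP⟩, hq.typeB_subset hna hP⟩,
      fun B ⟨⟨hBI, _⟩, hBq⟩ => hq.1.eq_of_typeB_subset hBI hBq⟩⟩
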